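/- arXiv:2605.01172 — 9 statements merged into one kernel-verified Lean document; each statement's English description precedes it below -/
import Mathlib

section
/- Let s ≤ T be real numbers and let J_S : ℝ → Matrix (Fin N) (Fin d) ℝ, J_Q : ℝ → Matrix (Fin M) (Fin d) ℝ, and P : ℝ → Matrix (Fin N) (Fin N) ℝ be continuous on [s,T]. Define W = ∫_{s}^{T} P(τ)ᵀ · J_S(τ) · J_S(τ)ᵀ · P(τ) dτ and G = ∫_{s}^{T} J_Q(τ) · J_S(τ)ᵀ · P(τ) dτ (entrywise integrals of continuous matrix-valued functions). Then the kernel of W is contained in the kernel of G: for every vector h ∈ ℝ^N, if W.mulVec h = 0 then G.mulVec h = 0. -/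
open MeasureTheory Matrix

/-- Entrywise continuity of a matrix product, given entrywise continuity of factors. -/
lemma contOn_matrix_mul {α β γ : Type*} [Fintype β] {s : Set ℝ}
    (A : ℝ → Matrix α β ℝ) (B : ℝ → Matrix β γ ℝ)
    (hA : ∀ i j, ContinuousOn (fun τ => A τ i j) s)
    (hB : ∀ i j, ContinuousOn (fun τ => B τ i j) s) :
    ∀ i j, ContinuousOn (fun τ => (A τ * B τ) i j) s := by
  intro i j
  simp only [Matrix.mul_apply]
  exact continuousOn_finset_sum _ fun k _ => (hA i k).mul (hB k j)

/-- **Reservoir test-invisibility.** The kernel of the cumulative dissipation Gramian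
`W = ∫_s^T P(τ)ᵀ J_S(τ) J_S(τ)ᵀ P(τ) dτ` is contained in the kernel of the test transfer
operator `G = ∫_s^T J_Q(τ) J_S(τ)ᵀ P(τ) dτ`. -/
theorem reservoir_test_invisibility {N M d : ℕ} (s T : ℝ) (hsT : s ≤ T)
    (J_S : ℝ → Matrix (Fin N) (Fin d) ℝ)
    (J_Q : ℝ → Matrix (Fin M) (Fin d) ℝ)
    (P : ℝ → Matrix (Fin N) (Fin N) ℝ)
    (hJS : ∀ i j, ContinuousOn (fun τ => J_S τ i j) (Set.Icc s T))
    (hJQ : ∀ i j, ContinuousOn (fun τ => J_Q τ i j) (Set.Icc s T))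
    (hP : ∀ i j, ContinuousOn (fun τ => P τ i j) (Set.Icc s T))
    (W : Matrix (Fin N) (Fin N) ℝ)
    (hW : W = Matrix.of fun i j =>
      ∫ τ in s..T, ((P τ)ᵀ * (J_S τ * (J_S τ)ᵀ) * P τ) i j)
    (G : Matrix (Fin M) (Fin N) ℝ)
    (hG : G = Matrix.of fun i j =>
      ∫ τ in s..T, (J_Q τ * (J_S τ)ᵀ * P τ) i j)
    (h : Fin N → ℝ) (hh : W.mulVec h = 0) :
    G.mulVec h = 0 := by
  set A : ℝ → Matrix (Fin d) (Fin N) ℝ := fun τ => (J_S τ)ᵀ * P τ with hA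
  set f : ℝ → Fin d → ℝ := fun τ => (A τ).mulVec h with hf
  set g : ℝ → ℝ := fun τ => ∑ k, f τ k * f τ k with hg
  have hJSt : ∀ i j, ContinuousOn (fun τ => (J_S τ)ᵀ i j) (Set.Icc s T) := by
    intro i j; simpa [Matrix.transpose_apply] using hJS j i
  have hAcont : ∀ i j, ContinuousOn (fun τ => A τ i j) (Set.Icc s T) :=
    contOn_matrix_mul _ _ hJSt hP
  have hfcont : ∀ k, ContinuousOn (fun τ => f τ k) (Set.Icc s T) := by
    intro k
    simp only [hf, Matrix.mulVec, dotProduct]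
    exact continuousOn_finset_sum _ fun j _ => (hAcont k j).mul continuousOn_const
  have hgcont : ContinuousOn g (Set.Icc s T) :=
    continuousOn_finset_sum _ fun k _ => (hfcont k).mul (hfcont k)
  have hMcont : ∀ i j, ContinuousOn
      (fun τ => ((P τ)ᵀ * (J_S τ * (J_S τ)ᵀ) * P τ) i j) (Set.Icc s T) := by
    have hPt : ∀ i j, ContinuousOn (fun τ => (P τ)ᵀ i j) (Set.Icc s T) := by
      intro i j; simpa [Matrix.transpose_apply] using hP j i
    exact contOn_matrix_mul _ _
      (contOn_matrix_mul _ _ hPt (contOn_matrix_mul _ _ hJS hJSt)) hP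
  have hNcont : ∀ i j, ContinuousOn
      (fun τ => (J_Q τ * (J_S τ)ᵀ * P τ) i j) (Set.Icc s T) :=
    contOn_matrix_mul _ _ (contOn_matrix_mul _ _ hJQ hJSt) hP
  -- pointwise algebra: hᵀ M(τ) h = g τ
  have alg1 : ∀ τ, h ⬝ᵥ (((P τ)ᵀ * (J_S τ * (J_S τ)ᵀ) * P τ).mulVec h) = g τ := by
    intro τ
    have hM : (P τ)ᵀ * (J_S τ * (J_S τ)ᵀ) * P τ = (A τ)ᵀ * A τ := by
      simp [hA, Matrix.transpose_mul, Matrix.mul_assoc]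
    rw [hM, ← Matrix.mulVec_mulVec, Matrix.dotProduct_mulVec, Matrix.vecMul_transpose]
    simp [hg, hf, dotProduct]
  have alg2 : ∀ τ, (J_Q τ * (J_S τ)ᵀ * P τ).mulVec h = (J_Q τ).mulVec (f τ) := by
    intro τ
    rw [Matrix.mul_assoc, ← Matrix.mulVec_mulVec]
  -- integrability of the entrywise integrands weighted by h
  have toII : ∀ {F : ℝ → ℝ}, ContinuousOn F (Set.Icc s T) →
      IntervalIntegrable F volume s T := fun hF =>
    (hF.mono (Set.uIcc_of_le hsT).subset).intervalIntegrable
  have hint : ∀ i j, IntervalIntegrable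
      (fun τ => h i * (((P τ)ᵀ * (J_S τ * (J_S τ)ᵀ) * P τ) i j * h j)) volume s T := by
    intro i j
    exact toII (continuousOn_const.mul ((hMcont i j).mul continuousOn_const))
  -- hᵀ W h = ∫ g, and the left side is 0
  have key : (0 : ℝ) = ∫ τ in s..T, g τ := by
    have h0 : h ⬝ᵥ W.mulVec h = 0 := by rw [hh]; simp
    rw [← h0, hW]
    have step1 : h ⬝ᵥ (Matrix.of fun i j =>
        ∫ τ in s..T, ((P τ)ᵀ * (J_S τ * (J_S τ)ᵀ) * P τ) i j).mulVec h
        = ∑ i, ∑ j, ∫ τ in s..T,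
            h i * (((P τ)ᵀ * (J_S τ * (J_S τ)ᵀ) * P τ) i j * h j) := by
      simp only [Matrix.mulVec, dotProduct, Matrix.of_apply, Finset.mul_sum]
      refine Finset.sum_congr rfl fun i _ => Finset.sum_congr rfl fun j _ => ?_
      rw [← intervalIntegral.integral_mul_const, ← intervalIntegral.integral_const_mul]
    rw [step1]
    have step2 : ∀ i ∈ Finset.univ, (∑ j, ∫ τ in s..T,
          h i * (((P τ)ᵀ * (J_S τ * (J_S τ)ᵀ) * P τ) i j * h j))
        = ∫ τ in s..T, ∑ j, h i * (((P τ)ᵀ * (J_S τ * (J_S τ)ᵀ) * P τ) i j * h j) :=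
      fun i _ => (intervalIntegral.integral_finset_sum (fun j _ => hint i j)).symm
    rw [Finset.sum_congr rfl step2]
    refine ((intervalIntegral.integral_finset_sum
      (f := fun i τ => ∑ j, h i * (((P τ)ᵀ * (J_S τ * (J_S τ)ᵀ) * P τ) i j * h j))
      (fun i _ => toII (continuousOn_finset_sum Finset.univ (fun j _ =>
        continuousOn_const.mul ((hMcont i j).mul continuousOn_const))))).symm).trans ?_
    apply intervalIntegral.integral_congr
    intro τ _
    rw [← alg1 τ]
    simp [dotProduct, Matrix.mulVec, Finset.mul_sum, mul_assoc]
  -- g vanishes a.e. on Ioc s T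
  have hgae : ∀ᵐ τ ∂(volume.restrict (Set.Ioc s T)), g τ = 0 := by
    have hgint : IntegrableOn g (Set.Ioc s T) volume :=
      (intervalIntegrable_iff_integrableOn_Ioc_of_le hsT).mp (toII hgcont)
    have hnn : 0 ≤ᵐ[volume.restrict (Set.Ioc s T)] g :=
      Filter.Eventually.of_forall fun τ =>
        Finset.sum_nonneg fun k _ => mul_self_nonneg _
    have h0 : ∫ τ in Set.Ioc s T, g τ = 0 := by
      rw [← intervalIntegral.integral_of_le hsT, ← key]
    exact (integral_eq_zero_iff_of_nonneg_ae hnn hgint).mp h0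
  -- hence f vanishes a.e. on Ioc s T
  have hfae : ∀ᵐ τ ∂(volume.restrict (Set.Ioc s T)), f τ = 0 := by
    filter_upwards [hgae] with τ hτ
    funext k
    have := (Finset.sum_eq_zero_iff_of_nonneg
      (fun k _ => mul_self_nonneg (f τ k))).mp hτ k (Finset.mem_univ k)
    exact mul_self_eq_zero.mp this
  -- conclude G h = 0 entrywise
  rw [hG]
  funext i
  have hintG : ∀ j, IntervalIntegrable
      (fun τ => (J_Q τ * (J_S τ)ᵀ * P τ) i j * h j) volume s T :=
    fun j => toII ((hNcont i j).mul continuousOn_const)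
  have key2 : (Matrix.of fun i j => ∫ τ in s..T, (J_Q τ * (J_S τ)ᵀ * P τ) i j).mulVec h i
      = ∫ τ in s..T, ((J_Q τ * (J_S τ)ᵀ * P τ).mulVec h) i := by
    simp only [Matrix.mulVec, dotProduct, Matrix.of_apply]
    calc ∑ j, (∫ τ in s..T, (J_Q τ * (J_S τ)ᵀ * P τ) i j) * h j
        = ∑ j, ∫ τ in s..T, (J_Q τ * (J_S τ)ᵀ * P τ) i j * h j :=
          Finset.sum_congr rfl fun j _ => (intervalIntegral.integral_mul_const _ _).symm
      _ = ∫ τ in s..T, ∑ j, (J_Q τ * (J_S τ)ᵀ * P τ) i j * h j :=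
          (intervalIntegral.integral_finset_sum (fun j _ => hintG j)).symm
  rw [key2, intervalIntegral.integral_of_le hsT]
  show _ = (0 : Fin M → ℝ) i
  rw [Pi.zero_apply]
  apply MeasureTheory.integral_eq_zero_of_ae
  filter_upwards [hfae] with τ hτ
  rw [alg2 τ, hτ]
  simp
end

section
/- Let s ≤ T, let B be a constant symmetric positive definite N×N real matrix, let K : ℝ → Matrix (Fin N) (Fin N) ℝ be continuous on [s,T] with each K(τ) symmetric positive semidefinite, and let P : ℝ → Matrix (Fin N) (Fin N) ℝ satisfy the matrix ODE P'(τ) = −B · K(τ) · P(τ) for τ ∈ [s,T] with P(s) = 1 (identity). Then: (i) ∫_{s}^{T} K(τ) · P(τ) dτ = B⁻¹ · (1 − P(T)); and (ii) for every h ∈ ℝ^N, hᵀ (∫_{s}^{T} P(τ)ᵀ K(τ) P(τ) dτ) h = (1/2)·( hᵀ B⁻¹ h − (P(T).mulVec h)ᵀ B⁻¹ (P(T).mulVec h) ). -/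
/-!
Along the flow `P' = -B K P`, the matrices `B⁻¹ (1 - P)` and `½ (B⁻¹ - Pᵀ B⁻¹ P)` are
antiderivatives of `K P` and `Pᵀ K P` (the second because `B` and `K` are symmetric), and both
vanish at `τ = s` where `P = 1`. Both formulas are therefore the fundamental theorem of calculus,
applied entry by entry.
-/

open MeasureTheory Matrix

namespace Matrix

variable {l m n : Type*}

theorem hasDerivAt_mul_apply {𝕜 : Type*} [NontriviallyNormedField 𝕜] [Fintype m]
    {F : 𝕜 → Matrix l m 𝕜} {G : 𝕜 → Matrix m n 𝕜} {F' : Matrix l m 𝕜} {G' : Matrix m n 𝕜}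
    {τ : 𝕜} (hF : ∀ i k, HasDerivAt (fun u => F u i k) (F' i k) τ)
    (hG : ∀ k j, HasDerivAt (fun u => G u k j) (G' k j) τ) (i : l) (j : n) :
    HasDerivAt (fun u => (F u * G u) i j) ((F' * G τ + F τ * G') i j) τ := by
  simp only [mul_apply, add_apply, ← Finset.sum_add_distrib]
  exact HasDerivAt.fun_sum fun k _ => (hF i k).mul (hG k j)

theorem of_intervalIntegral_eq_sub_of_hasDerivAt {F F' : ℝ → Matrix m n ℝ} {a b : ℝ}
    (hF : ∀ τ ∈ Set.uIcc a b, ∀ i j, HasDerivAt (fun u => F u i j) (F' τ i j) τ)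
    (hF' : ContinuousOn F' (Set.uIcc a b)) :
    (of fun i j => ∫ τ in a..b, F' τ i j) = F b - F a := by
  ext i j
  exact intervalIntegral.integral_eq_sub_of_hasDerivAt (fun τ hτ => hF τ hτ i j)
    ((continuous_apply_apply i j).comp_continuousOn hF').intervalIntegrable

theorem dotProduct_transpose_mul_mul_mulVec {R : Type*} [CommSemiring R] [Fintype m]
    [Fintype n] (A : Matrix m n R) (C : Matrix m m R) (h : n → R) :
    h ⬝ᵥ (Aᵀ * C * A) *ᵥ h = A *ᵥ h ⬝ᵥ C *ᵥ (A *ᵥ h) := by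
  rw [← mulVec_mulVec, ← mulVec_mulVec, dotProduct_mulVec, vecMul_transpose]

end Matrix

section GradientFlow

variable {𝕜 n : Type*} [NontriviallyNormedField 𝕜] [Fintype n] [DecidableEq n]
  {B K : Matrix n n 𝕜} {P : 𝕜 → Matrix n n 𝕜} {τ : 𝕜}

theorem hasDerivAt_inv_mul_one_sub_apply (hB : IsUnit B.det)
    (hP : ∀ i j, HasDerivAt (fun u => P u i j) ((-(B * K * P τ)) i j) τ) (i j : n) :
    HasDerivAt (fun u => (B⁻¹ * (1 - P u)) i j) ((K * P τ) i j) τ := by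
  have h1P (i j : n) : HasDerivAt (fun u => (1 - P u) i j) ((B * K * P τ) i j) τ := by
    simpa using (hP i j).const_sub ((1 : Matrix n n 𝕜) i j)
  refine (hasDerivAt_mul_apply (F := fun _ => B⁻¹) (F' := 0)
    (fun _ _ => hasDerivAt_const τ _) h1P i j).congr_deriv ?_
  rw [zero_mul, zero_add, mul_assoc, ← mul_assoc B⁻¹, nonsing_inv_mul B hB, one_mul]

theorem hasDerivAt_half_smul_inv_sub_transpose_mul_inv_mul_apply [CharZero 𝕜]
    (hBsymm : B.IsSymm) (hB : IsUnit B.det) (hK : K.IsSymm)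
    (hP : ∀ i j, HasDerivAt (fun u => P u i j) ((-(B * K * P τ)) i j) τ) (i j : n) :
    HasDerivAt (fun u => ((1 / 2 : 𝕜) • (B⁻¹ - (P u)ᵀ * B⁻¹ * P u)) i j)
      (((P τ)ᵀ * K * P τ) i j) τ := by
  have hPCP := hasDerivAt_mul_apply (F := fun u => (P u)ᵀ * B⁻¹)
    (hasDerivAt_mul_apply (F := fun u => (P u)ᵀ) (F' := (-(B * K * P τ))ᵀ)
      (G := fun _ => B⁻¹) (G' := 0) (fun i j => hP j i) (fun _ _ => hasDerivAt_const τ _))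
    hP i j
  refine ((hPCP.const_sub (B⁻¹ i j)).const_mul (1 / 2 : 𝕜)).congr_deriv ?_
  have hBKP : (B * K * P τ)ᵀ * B⁻¹ * P τ = (P τ)ᵀ * K * P τ := by
    simp only [transpose_mul, hBsymm.eq, hK.eq, Matrix.mul_assoc,
      mul_nonsing_inv_cancel_left _ _ hB]
  have hBinvBKP : (P τ)ᵀ * B⁻¹ * (B * K * P τ) = (P τ)ᵀ * K * P τ := by
    simp only [Matrix.mul_assoc, nonsing_inv_mul_cancel_left _ _ hB]
  simp only [Matrix.mul_zero, add_zero, transpose_neg, Matrix.neg_mul, Matrix.mul_neg, hBKP,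
    hBinvBKP, Matrix.add_apply, Matrix.neg_apply]
  ring

end GradientFlow

theorem displacement_and_dissipation_formulas_general {N : ℕ} (s T : ℝ) (hsT : s ≤ T)
    (B : Matrix (Fin N) (Fin N) ℝ) (hBsymm : B.IsSymm) (hBpd : B.PosDef)
    (K : ℝ → Matrix (Fin N) (Fin N) ℝ)
    (hKcont : ∀ i j, ContinuousOn (fun τ => K τ i j) (Set.Icc s T))
    (hKsymm : ∀ τ ∈ Set.Icc s T, (K τ).IsSymm)
    (P : ℝ → Matrix (Fin N) (Fin N) ℝ)
    (hP : ∀ τ ∈ Set.Icc s T, ∀ i j,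
      HasDerivAt (fun u => P u i j) ((-(B * K τ * P τ)) i j) τ)
    (hPs : P s = 1) :
    (Matrix.of fun i j => ∫ τ in s..T, (K τ * P τ) i j) = B⁻¹ * (1 - P T)
      ∧ ∀ h : Fin N → ℝ,
        h ⬝ᵥ (Matrix.of fun i j => ∫ τ in s..T, ((P τ)ᵀ * K τ * P τ) i j).mulVec h
          = (1 / 2) * (h ⬝ᵥ B⁻¹.mulVec h
              - (P T).mulVec h ⬝ᵥ B⁻¹.mulVec ((P T).mulVec h)) := by
  have hB : IsUnit B.det := (isUnit_iff_isUnit_det B).1 hBpd.isUnit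
  rw [← Set.uIcc_of_le hsT] at hKcont hKsymm hP
  have hKc : ContinuousOn K (Set.uIcc s T) :=
    continuousOn_pi.2 fun i => continuousOn_pi.2 (hKcont i)
  have hPc : ContinuousOn P (Set.uIcc s T) := continuousOn_pi.2 fun i => continuousOn_pi.2
    fun j τ hτ => (hP τ hτ i j).continuousAt.continuousWithinAt
  refine ⟨?_, fun h => ?_⟩
  · rw [of_intervalIntegral_eq_sub_of_hasDerivAt (F := fun τ => B⁻¹ * (1 - P τ))
      (fun τ hτ => hasDerivAt_inv_mul_one_sub_apply hB (hP τ hτ)) (hKc.mul hPc), hPs]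
    simp
  · rw [of_intervalIntegral_eq_sub_of_hasDerivAt
      (F := fun τ => (1 / 2 : ℝ) • (B⁻¹ - (P τ)ᵀ * B⁻¹ * P τ))
      (fun τ hτ => hasDerivAt_half_smul_inv_sub_transpose_mul_inv_mul_apply hBsymm hB
        (hKsymm τ hτ) (hP τ hτ))
      (((continuous_id.matrix_transpose.comp_continuousOn hPc).mul hKc).mul hPc), hPs]
    simp [smul_mulVec, sub_mulVec, dotProduct_transpose_mul_mul_mulVec]

/-- Explicit formulas for the training displacement operator and the cumulative dissipation
Gramian under a quadratic loss with constant positive definite Hessian `B`: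
(i) `∫_s^T K(τ) P(τ) dτ = B⁻¹ (1 − P(T))`;
(ii) `hᵀ (∫_s^T P(τ)ᵀ K(τ) P(τ) dτ) h = ½ (hᵀ B⁻¹ h − (P(T)h)ᵀ B⁻¹ (P(T)h))`. -/
theorem displacement_and_dissipation_formulas {N : ℕ} (s T : ℝ) (hsT : s ≤ T)
    (B : Matrix (Fin N) (Fin N) ℝ) (hBsymm : B.IsSymm) (hBpd : B.PosDef)
    (K : ℝ → Matrix (Fin N) (Fin N) ℝ)
    (hKcont : ∀ i j, ContinuousOn (fun τ => K τ i j) (Set.Icc s T))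
    (hKsymm : ∀ τ ∈ Set.Icc s T, (K τ).IsSymm)
    (hKpsd : ∀ τ ∈ Set.Icc s T, (K τ).PosSemidef)
    (P : ℝ → Matrix (Fin N) (Fin N) ℝ)
    (hP : ∀ τ ∈ Set.Icc s T, ∀ i j,
      HasDerivAt (fun u => P u i j) ((-(B * K τ * P τ)) i j) τ)
    (hPs : P s = 1) :
    (Matrix.of fun i j => ∫ τ in s..T, (K τ * P τ) i j) = B⁻¹ * (1 - P T)
      ∧ ∀ h : Fin N → ℝ,
        h ⬝ᵥ (Matrix.of fun i j => ∫ τ in s..T, ((P τ)ᵀ * K τ * P τ) i j).mulVec h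
          = (1 / 2) * (h ⬝ᵥ B⁻¹.mulVec h
              - (P T).mulVec h ⬝ᵥ B⁻¹.mulVec ((P T).mulVec h)) :=
  displacement_and_dissipation_formulas_general s T hsT B hBsymm hBpd K hKcont hKsymm P hP hPs
end

section
/- Let D ∈ Matrix (Fin m) (Fin n) ℝ and G ∈ Matrix (Fin q) (Fin n) ℝ. The following are equivalent: (i) ker D ⊆ ker G, i.e. for every h ∈ ℝ^n, D.mulVec h = 0 implies G.mulVec h = 0; (ii) there exists A ∈ Matrix (Fin q) (Fin m) ℝ with G = A · D; (iii) the range (column span) of Gᵀ is contained in the range of Dᵀ; (iv) there exists λ ≥ 0 such that λ·(Dᵀ·D) − Gᵀ·G is positive semidefinite. -/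
/-!
`G = A D` says that every row of `G` is a combination of the rows of `D`, and over a field `G`
factors through `D` exactly when `ker D ⊆ ker G`; this gives (i) ⇔ (ii) ⇔ (iii). Condition (iv)
says `‖G x‖² ≤ λ ‖D x‖²` for all `x`. If `G = A D`, Cauchy–Schwarz gives this with `λ` the squared
Frobenius norm of `A`; conversely the inequality forces `G x = 0` whenever `D x = 0`.
-/

open Matrix

theorem LinearMap.exists_comp_eq_of_ker_le {K V W U : Type*} [Field K] [AddCommGroup V]
    [Module K V] [AddCommGroup W] [Module K W] [AddCommGroup U] [Module K U]
    (f : V →ₗ[K] W) (g : V →ₗ[K] U) (h : ker f ≤ ker g) : ∃ l : W →ₗ[K] U, l ∘ₗ f = g := by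
  obtain ⟨r, hr⟩ := ((ker f).liftQ f le_rfl).exists_leftInverse_of_injective
    ((ker f).ker_liftQ_eq_bot f le_rfl le_rfl)
  refine ⟨(ker f).liftQ g h ∘ₗ r, LinearMap.ext fun x => ?_⟩
  have hrx : r (f x) = (ker f).mkQ x := LinearMap.congr_fun hr ((ker f).mkQ x)
  simp [hrx]

namespace Matrix

variable {K R : Type*} {l m n : Type*}

theorem exists_eq_mul_of_ker_le [Field K] [Fintype m] [Fintype n] [DecidableEq m]
    [DecidableEq n] {D : Matrix m n K} {G : Matrix l n K}
    (h : ∀ x, D *ᵥ x = 0 → G *ᵥ x = 0) : ∃ A : Matrix l m K, G = A * D := by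
  obtain ⟨f, hf⟩ := D.mulVecLin.exists_comp_eq_of_ker_le G.mulVecLin fun x => h x
  refine ⟨LinearMap.toMatrix' f, ?_⟩
  rw [← LinearMap.toMatrix'_toLin' D, ← LinearMap.toMatrix'_comp, toLin'_apply', hf]
  exact (LinearMap.toMatrix'_toLin' G).symm

theorem exists_eq_mul_iff_range_transpose_le [CommRing R] [Fintype l] [Fintype m]
    {D : Matrix m n R} {G : Matrix l n R} :
    (∃ A : Matrix l m R, G = A * D) ↔
      LinearMap.range Gᵀ.mulVecLin ≤ LinearMap.range Dᵀ.mulVecLin := by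
  rw [range_mulVecLin, Submodule.span_le, col_transpose, Set.range_subset_iff]
  simp only [SetLike.mem_coe, LinearMap.mem_range, mulVecLin_apply, mulVec_transpose]
  constructor
  · rintro ⟨A, rfl⟩ i
    exact ⟨A i, rfl⟩
  · intro h
    choose A hA using h
    exact ⟨A, funext fun i => (hA i).symm⟩

theorem dotProduct_transpose_mul_self_mulVec [CommSemiring R] [Fintype l] [Fintype n]
    (A : Matrix l n R) (x : n → R) :
    x ⬝ᵥ (Aᵀ * A) *ᵥ x = (A *ᵥ x) ⬝ᵥ (A *ᵥ x) := by
  rw [← mulVec_mulVec, dotProduct_mulVec, vecMul_transpose]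

theorem mulVec_dotProduct_mulVec_le [Fintype l] [Fintype n] (A : Matrix l n ℝ) (x : n → ℝ) :
    (A *ᵥ x) ⬝ᵥ (A *ᵥ x) ≤ (∑ i, ∑ j, A i j ^ 2) * (x ⬝ᵥ x) := by
  simp only [dotProduct, mulVec, ← sq]
  rw [Finset.sum_mul]
  exact Finset.sum_le_sum fun i _ => Finset.sum_mul_sq_le_sq_mul_sq _ _ _

theorem posSemidef_smul_transpose_mul_self_sub_iff [Fintype l] [Fintype m] [Fintype n] (c : ℝ)
    (D : Matrix m n ℝ) (G : Matrix l n ℝ) :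
    (c • (Dᵀ * D) - Gᵀ * G).PosSemidef ↔
      ∀ x, (G *ᵥ x) ⬝ᵥ (G *ᵥ x) ≤ c * (D *ᵥ x) ⬝ᵥ (D *ᵥ x) := by
  have hherm : (c • (Dᵀ * D) - Gᵀ * G).IsHermitian := by
    simp only [← conjTranspose_eq_transpose_of_trivial]
    exact ((isHermitian_conjTranspose_mul_self D).smul (IsSelfAdjoint.all c)).sub
      (isHermitian_conjTranspose_mul_self G)
  simp only [posSemidef_iff_dotProduct_mulVec, hherm, true_and, star_trivial, sub_mulVec,
    dotProduct_sub, smul_mulVec, dotProduct_smul, dotProduct_transpose_mul_self_mulVec,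
    smul_eq_mul, sub_nonneg]

end Matrix

/-- **Exact transfer equivalences.** For real matrices `D : m × n` and `G : q × n`,
the following are equivalent: (i) `ker D ⊆ ker G`; (ii) `G = A * D` for some `A`;
(iii) `range Gᵀ ⊆ range Dᵀ` (column spans); (iv) `Gᵀ G ⪯ λ Dᵀ D` for some `λ ≥ 0`. -/
theorem exact_transfer_equivalences {m n q : ℕ}
    (D : Matrix (Fin m) (Fin n) ℝ) (G : Matrix (Fin q) (Fin n) ℝ) :
    List.TFAE
      [ ∀ h : Fin n → ℝ, D.mulVec h = 0 → G.mulVec h = 0,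
        ∃ A : Matrix (Fin q) (Fin m) ℝ, G = A * D,
        LinearMap.range (Matrix.mulVecLin Gᵀ) ≤ LinearMap.range (Matrix.mulVecLin Dᵀ),
        ∃ lam : ℝ, 0 ≤ lam ∧ (lam • (Dᵀ * D) - Gᵀ * G).PosSemidef ] := by
  tfae_have 1 → 2 := exists_eq_mul_of_ker_le
  tfae_have 2 ↔ 3 := exists_eq_mul_iff_range_transpose_le
  tfae_have 2 → 4 := by
    rintro ⟨A, rfl⟩
    refine ⟨∑ i, ∑ j, A i j ^ 2, by positivity,
      (posSemidef_smul_transpose_mul_self_sub_iff _ _ _).2 fun x => ?_⟩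
    rw [← mulVec_mulVec]
    exact mulVec_dotProduct_mulVec_le A (D *ᵥ x)
  tfae_have 4 → 1 := by
    rintro ⟨lam, -, hlam⟩ x hx
    have hGx := (posSemidef_smul_transpose_mul_self_sub_iff _ _ _).1 hlam x
    rw [hx, zero_dotProduct, mul_zero] at hGx
    exact dotProduct_self_eq_zero.1 (le_antisymm hGx (dotProduct_self_star_nonneg _))
  tfae_finish
end

section
/- Let W ∈ Matrix (Fin n) (Fin n) ℝ be symmetric positive semidefinite, and let D ∈ Matrix (Fin m) (Fin n) ℝ, G ∈ Matrix (Fin q) (Fin n) ℝ satisfy: W.mulVec h = 0 implies D.mulVec h = 0 and G.mulVec h = 0. Then the infimum over ALL functions Ψ : ℝ^m → ℝ^q (not necessarily linear) of sup{ ‖G.mulVec h − Ψ(D.mulVec h)‖₂ / √(hᵀWh) : h ∈ ℝ^n, hᵀWh > 0 } equals sup{ ‖G.mulVec h‖₂ / √(hᵀWh) : h ∈ ℝ^n, D.mulVec h = 0, hᵀWh > 0 }. -/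
/-!
Factor `W = Bᴴ B`, so that `√(hᵀWh) = ‖Bh‖`.

Lower bound: for `h ∈ ker D` a predictor receives the same input `D h = D (-h) = 0`, so it answers
`h` and `-h` with the same vector `a`, and by the triangle inequality one of
`‖Gh - a‖`, `‖-Gh - a‖` is at least `‖Gh‖`.

Upper bound: let `S = B (ker D)`. In each fibre of `D` pick the point `p` with `Bp ⊥ S`
and predict `Gp`. For `h` in that fibre, `h - p ∈ ker D` and `B (h - p)` is the orthogonal
projection of `Bh` onto `S`, so the error `G (h - p)` is a test motion invisible in training
whose `W`-size is at most that of `h`.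
-/

open ENNReal Matrix

section NormalizedError

variable {E Y F Z : Type*} [AddCommGroup E] [Module ℝ E] [AddCommGroup Y] [Module ℝ Y]
  [NormedAddCommGroup F] [NormedSpace ℝ F] [NormedAddCommGroup Z] [NormedSpace ℝ Z]
  (B : E →ₗ[ℝ] F) (D : E →ₗ[ℝ] Y) (G : E →ₗ[ℝ] Z)

theorem norm_le_max_norm_sub_norm_neg_sub (u a : Z) : ‖u‖ ≤ max ‖u - a‖ ‖-u - a‖ := by
  have : ‖(2 : ℝ) • u‖ ≤ ‖u - a‖ + ‖-u - a‖ := by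
    rw [two_smul, show u + u = (u - a) - (-u - a) by abel]
    exact norm_sub_le _ _
  rw [norm_smul, Real.norm_two] at this
  grind

theorem iSup_ker_le_iSup_norm_sub_div (Ψ : Y → Z) :
    ⨆ (h : E) (_ : D h = 0) (_ : 0 < ‖B h‖), ENNReal.ofReal (‖G h‖ / ‖B h‖)
      ≤ ⨆ (h : E) (_ : 0 < ‖B h‖), ENNReal.ofReal (‖G h - Ψ (D h)‖ / ‖B h‖) := by
  refine iSup₂_le fun h hDh => iSup_le fun hpos => ?_
  rcases le_max_iff.mp (norm_le_max_norm_sub_norm_neg_sub (G h) (Ψ 0)) with hle | hle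
  · refine le_iSup₂_of_le h hpos ?_
    rw [hDh]
    gcongr
  · refine le_iSup₂_of_le (-h) (by rwa [map_neg, norm_neg]) ?_
    simp only [map_neg, hDh, neg_zero, norm_neg]
    gcongr

theorem ofReal_norm_div_le_iSup_ker (hker : ∀ h, B h = 0 → G h = 0) {z : E} (hz : D z = 0)
    {r : ℝ} (hzr : ‖B z‖ ≤ r) :
    ENNReal.ofReal (‖G z‖ / r)
      ≤ ⨆ (h : E) (_ : D h = 0) (_ : 0 < ‖B h‖), ENNReal.ofReal (‖G h‖ / ‖B h‖) := by
  rcases (norm_nonneg (B z)).eq_or_lt with hBz | hBz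
  · simp [hker z (norm_eq_zero.mp hBz.symm)]
  · refine le_iSup₂_of_le z hz (le_iSup_of_le hBz ?_)
    gcongr

end NormalizedError

section Projection

variable {E Y F : Type*} [AddCommGroup E] [Module ℝ E] [FiniteDimensional ℝ E]
  [AddCommGroup Y] [Module ℝ Y] [NormedAddCommGroup F] [InnerProductSpace ℝ F]
  (B : E →ₗ[ℝ] F) (D : E →ₗ[ℝ] Y)

theorem exists_fiber_point_map_sub_eq_starProjection (h₀ : E) :
    ∃ p, D p = D h₀ ∧ ∀ h, D h = D h₀ →
      B (h - p) = ((LinearMap.ker D).map B).starProjection (B h) := by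
  set S := (LinearMap.ker D).map B
  obtain ⟨k, hk, hBk⟩ := Submodule.mem_map.mp (S.starProjection_apply_mem (B h₀))
  have hDk : D k = 0 := hk
  refine ⟨h₀ - k, by simp [hDk], fun h hh => ?_⟩
  have hmem : h - (h₀ - k) ∈ LinearMap.ker D := by simp [hh, hDk]
  rw [map_sub B h]
  refine (S.eq_starProjection_of_mem_orthogonal' ?_ ?_
    (sub_add_cancel (B h) (B (h₀ - k))).symm).symm
  · exact map_sub B h _ ▸ Submodule.mem_map_of_mem hmem
  · rw [map_sub, hBk]
    exact S.sub_starProjection_mem_orthogonal (B h₀)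

theorem exists_section_norm_map_sub_le :
    ∃ σ : Y → E, ∀ h, D (σ (D h)) = D h ∧ ‖B (h - σ (D h))‖ ≤ ‖B h‖ := by
  have : ∀ y, ∃ p, ∀ h, D h = y → D p = y ∧ ‖B (h - p)‖ ≤ ‖B h‖ := by
    intro y
    by_cases hy : ∃ h₀, D h₀ = y
    · obtain ⟨h₀, rfl⟩ := hy
      obtain ⟨p, hp, hproj⟩ := exists_fiber_point_map_sub_eq_starProjection B D h₀
      exact ⟨p, fun h hh => ⟨hp, hproj h hh ▸ Submodule.norm_starProjection_apply_le _ _⟩⟩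
    · exact ⟨0, fun h hh => (hy ⟨h, hh⟩).elim⟩
  choose σ hσ using this
  exact ⟨σ, fun h => hσ _ h rfl⟩

theorem iInf_iSup_norm_sub_div_eq {Z : Type*} [NormedAddCommGroup Z] [NormedSpace ℝ Z] (G : E →ₗ[ℝ] Z)
    (hker : ∀ h, B h = 0 → G h = 0) :
    ⨅ Ψ : Y → Z, ⨆ (h : E) (_ : 0 < ‖B h‖), ENNReal.ofReal (‖G h - Ψ (D h)‖ / ‖B h‖)
      = ⨆ (h : E) (_ : D h = 0) (_ : 0 < ‖B h‖), ENNReal.ofReal (‖G h‖ / ‖B h‖) := by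
  refine le_antisymm ?_ (le_iInf (iSup_ker_le_iSup_norm_sub_div B D G))
  obtain ⟨σ, hσ⟩ := exists_section_norm_map_sub_le B D
  refine iInf_le_of_le (G ∘ σ) (iSup₂_le fun h _ => ?_)
  rw [Function.comp_apply, ← map_sub]
  exact ofReal_norm_div_le_iSup_ker B D G hker (by rw [map_sub, (hσ h).1, sub_self]) (hσ h).2

end Projection

theorem sqrt_sum_sq_eq_norm_toLp {ι : Type*} [Fintype ι] (x : ι → ℝ) :
    √(∑ i, x i ^ 2) = ‖WithLp.toLp 2 x‖ := by
  simp [EuclideanSpace.norm_eq]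

theorem sqrt_sum_sub_sq_eq_norm_toLp_sub {ι : Type*} [Fintype ι] (x y : ι → ℝ) :
    √(∑ i, (x i - y i) ^ 2) = ‖WithLp.toLp 2 x - WithLp.toLp 2 y‖ := by
  rw [← WithLp.toLp_sub, ← sqrt_sum_sq_eq_norm_toLp]
  rfl

theorem Matrix.dotProduct_conjTranspose_mul_self_mulVec {ι κ : Type*} [Fintype ι] [Fintype κ]
    (B : Matrix κ ι ℝ) (h : ι → ℝ) :
    h ⬝ᵥ (Bᴴ * B) *ᵥ h = ‖WithLp.toLp 2 (B *ᵥ h)‖ ^ 2 := by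
  rw [EuclideanSpace.real_norm_sq_eq, ← mulVec_mulVec, dotProduct_mulVec,
    conjTranspose_eq_transpose_of_trivial, vecMul_transpose]
  simp [dotProduct, sq]

open scoped MatrixOrder in
theorem Matrix.PosSemidef.exists_eq_conjTranspose_mul_self {ι : Type*} [Fintype ι]
    [DecidableEq ι] {W : Matrix ι ι ℝ} (hW : W.PosSemidef) : ∃ B : Matrix ι ι ℝ, W = Bᴴ * B :=
  CStarAlgebra.nonneg_iff_eq_star_mul_self.mp hW.nonneg

theorem nonlinear_optimality_general {m n q : ℕ}
    (W : Matrix (Fin n) (Fin n) ℝ) (hWpsd : W.PosSemidef)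
    (D : Matrix (Fin m) (Fin n) ℝ) (G : Matrix (Fin q) (Fin n) ℝ)
    (hker : ∀ h : Fin n → ℝ, W.mulVec h = 0 → D.mulVec h = 0 ∧ G.mulVec h = 0) :
    (⨅ Ψ : (Fin m → ℝ) → (Fin q → ℝ),
        ⨆ (h : Fin n → ℝ) (_ : 0 < h ⬝ᵥ W.mulVec h),
          ENNReal.ofReal
            (Real.sqrt (∑ i, (G.mulVec h i - Ψ (D.mulVec h) i) ^ 2)
              / Real.sqrt (h ⬝ᵥ W.mulVec h)))
      = ⨆ (h : Fin n → ℝ) (_ : D.mulVec h = 0) (_ : 0 < h ⬝ᵥ W.mulVec h),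
          ENNReal.ofReal
            (Real.sqrt (∑ i, (G.mulVec h i) ^ 2) / Real.sqrt (h ⬝ᵥ W.mulVec h)) := by
  obtain ⟨B, rfl⟩ := hWpsd.exists_eq_conjTranspose_mul_self
  have key := iInf_iSup_norm_sub_div_eq
    ((WithLp.linearEquiv 2 ℝ (Fin n → ℝ)).symm.toLinearMap ∘ₗ B.mulVecLin) D.mulVecLin
    ((WithLp.linearEquiv 2 ℝ (Fin q → ℝ)).symm.toLinearMap ∘ₗ G.mulVecLin)
    fun h hBh => by simpa using (hker h (by simp_all [← mulVec_mulVec])).2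
  rw [← (WithLp.equiv 2 (Fin q → ℝ)).symm.surjective.comp_left.iInf_comp] at key
  simp only [dotProduct_conjTranspose_mul_self_mulVec, sqrt_sum_sub_sq_eq_norm_toLp_sub,
    sqrt_sum_sq_eq_norm_toLp, sq_pos_iff]
  simpa using key

/-- **Nonlinear optimality of the linear predictor.** The infimum over all (not necessarily
linear) predictors `Ψ : ℝ^m → ℝ^q` of the normalized worst-case error
`sup ‖G h − Ψ(D h)‖₂ / √(hᵀWh)` equals the worst normalized test motion among directions
invisible in training displacement, `sup { ‖G h‖₂ / √(hᵀWh) : D h = 0 }`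
(suprema in `[0,∞]`, empty supremum `0`). -/
theorem nonlinear_optimality {m n q : ℕ}
    (W : Matrix (Fin n) (Fin n) ℝ) (hWsymm : W.IsSymm) (hWpsd : W.PosSemidef)
    (D : Matrix (Fin m) (Fin n) ℝ) (G : Matrix (Fin q) (Fin n) ℝ)
    (hker : ∀ h : Fin n → ℝ, W.mulVec h = 0 → D.mulVec h = 0 ∧ G.mulVec h = 0) :
    (⨅ Ψ : (Fin m → ℝ) → (Fin q → ℝ),
        ⨆ (h : Fin n → ℝ) (_ : 0 < h ⬝ᵥ W.mulVec h),
          ENNReal.ofReal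
            (Real.sqrt (∑ i, (G.mulVec h i - Ψ (D.mulVec h) i) ^ 2)
              / Real.sqrt (h ⬝ᵥ W.mulVec h)))
      = ⨆ (h : Fin n → ℝ) (_ : D.mulVec h = 0) (_ : 0 < h ⬝ᵥ W.mulVec h),
          ENNReal.ofReal
            (Real.sqrt (∑ i, (G.mulVec h i) ^ 2) / Real.sqrt (h ⬝ᵥ W.mulVec h)) :=
  nonlinear_optimality_general W hWpsd D G hker
end

section
/- Let (Z, 𝒵) be a measurable space, μ a probability measure on Z, n ≥ 2, and 1 ≤ k ≤ n−1. Let w_T : (Fin (n−k) → Z) → ℝ^d be measurable (the trained model on n−k points, after identifying the retained coordinates of any size-(n−k) index set with Fin (n−k) via the order isomorphism), and let Ψ : ℝ^d × Z → ℝ be measurable with the relevant integrals finite. Then 𝔼_{S∼μ^{⊗n}}[ (1/(n choose k)) ∑_{I ⊆ Fin n, |I|=k} (1/k) ∑_{i∈I} Ψ( w_T(S restricted to Iᶜ), S_i ) ] = 𝔼_{S'∼μ^{⊗(n−k)}}[ ∫_Z Ψ( w_T(S'), z ) dμ(z) ]. -/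
open MeasureTheory

/-- The tuple of coordinates of `S` outside `I`, reindexed by `Fin (n − k)` via the order
isomorphism of `Iᶜ` with `Fin (Iᶜ.card)` (with a junk value in the impossible case where
`Iᶜ.card ≠ n − k`). -/
noncomputable def restrictCompl {Z : Type*} {n k : ℕ} (I : Finset (Fin n))
    (S : Fin n → Z) (j : Fin (n - k)) : Z :=
  if h : (Iᶜ : Finset (Fin n)).card = n - k then S ((Iᶜ : Finset (Fin n)).orderIsoOfFin h j)
  else S (Fin.castLE (Nat.sub_le n k) j)

/-- Evaluation at a coordinate is measure preserving from a product of copies of a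
probability measure to that measure. -/
lemma measurePreserving_eval_aux {ι : Type*} [Fintype ι] {Z : Type*} [MeasurableSpace Z]
    (μ : Measure Z) [IsProbabilityMeasure μ] (a : ι) :
    MeasurePreserving (fun f : ι → Z => f a) (Measure.pi fun _ : ι => μ) μ := by
  classical
  refine ⟨measurable_pi_apply a, ?_⟩
  ext s hs
  rw [Measure.map_apply (measurable_pi_apply a) hs]
  have h1 : (fun f : ι → Z => f a) ⁻¹' s =
      Set.pi Set.univ (Function.update (fun _ : ι => (Set.univ : Set Z)) a s) := by
    rw [← Set.eval_preimage]
  rw [h1, Measure.pi_pi]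
  simp [Function.update_apply, apply_ite μ]

/-- The key measure-preserving map for a fixed fold `I` and held-out index `i ∈ I`. -/
lemma measurePreserving_restrictCompl {Z : Type*} [MeasurableSpace Z]
    (μ : Measure Z) [IsProbabilityMeasure μ] {n k : ℕ}
    (I : Finset (Fin n)) (h : (Iᶜ : Finset (Fin n)).card = n - k)
    {i : Fin n} (hi : i ∈ I) :
    MeasurePreserving (fun S : Fin n → Z => (restrictCompl I S, S i))
      (Measure.pi fun _ : Fin n => μ)
      ((Measure.pi fun _ : Fin (n - k) => μ).prod μ) := by
  classical
  set p : Fin n → Prop := fun m => m ∉ I with hp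
  have MP1 := measurePreserving_piEquivPiSubtypeProd (fun _ : Fin n => μ) p
  -- the order iso `Fin (n-k) ≃ {m // p m}`
  let e : Fin (n - k) ≃ {m : Fin n // p m} :=
    ((Iᶜ : Finset (Fin n)).orderIsoOfFin h).toEquiv.trans
      (Equiv.subtypeEquivRight (fun m => by simp [hp]))
  have MP3 :
      MeasurePreserving (MeasurableEquiv.piCongrLeft (fun _ : {m : Fin n // p m} => Z) e).symm
        (Measure.pi fun _ : {m : Fin n // p m} => μ)
        (Measure.pi fun _ : Fin (n - k) => μ) :=
    (MeasureTheory.measurePreserving_piCongrLeft (fun _ : {m : Fin n // p m} => μ) e).symm _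
  have MP2 :
      MeasurePreserving (fun f : {m : Fin n // ¬ p m} → Z => f ⟨i, by simp [hp, hi]⟩)
        (Measure.pi fun _ : {m : Fin n // ¬ p m} => μ) μ :=
    measurePreserving_eval_aux μ _
  have MP := (MP3.prod MP2).comp MP1
  have hfun : (fun S : Fin n → Z => (restrictCompl I S, S i)) =
      (Prod.map (MeasurableEquiv.piCongrLeft (fun _ : {m : Fin n // p m} => Z) e).symm
          (fun f : {m : Fin n // ¬ p m} → Z => f ⟨i, by simp [hp, hi]⟩)) ∘
        (MeasurableEquiv.piEquivPiSubtypeProd (fun _ : Fin n => Z) p) := by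
    funext S
    refine Prod.ext ?_ rfl
    funext j
    show restrictCompl I S j = (MeasurableEquiv.piCongrLeft (fun _ : {m : Fin n // p m} => Z)
      e).symm (fun m : {m : Fin n // p m} => S m) j
    have h2 : (MeasurableEquiv.piCongrLeft (fun _ : {m : Fin n // p m} => Z) e).symm
        (fun m : {m : Fin n // p m} => S m) j = S (e j) := by
      have : (MeasurableEquiv.piCongrLeft (fun _ : {m : Fin n // p m} => Z) e).symm
          (fun m : {m : Fin n // p m} => S m)
          = (Equiv.piCongrLeft (fun _ : {m : Fin n // p m} => Z) e).symm
            (fun m : {m : Fin n // p m} => S m) := rfl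
      rw [this, Equiv.piCongrLeft_symm_apply]
    rw [h2]
    simp only [restrictCompl, dif_pos h]
    rfl
  rw [hfun]
  exact MP

/-- **Cross-validation as population risk.** For `S ∼ μ^{⊗n}`, the expected `k`-fold
cross-validation risk (averaged over all size-`k` held-out subsets `I` and held-out points
`i ∈ I`, evaluating the model trained on the retained coordinates) equals the expected
population risk of the learner trained on `n − k` independent samples. -/
theorem cross_validation_as_population_risk {Z : Type*} [MeasurableSpace Z]
    (μ : Measure Z) [IsProbabilityMeasure μ]
    {n k d : ℕ} (hn : 2 ≤ n) (hk : 1 ≤ k) (hkn : k ≤ n - 1)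
    (wT : (Fin (n - k) → Z) → (Fin d → ℝ)) (hwT : Measurable wT)
    (Ψ : (Fin d → ℝ) × Z → ℝ) (hΨ : Measurable Ψ)
    (hint₁ : Integrable
      (fun S : Fin n → Z =>
        ((n.choose k : ℝ))⁻¹ *
          ∑ I ∈ Finset.powersetCard k (Finset.univ : Finset (Fin n)),
            (k : ℝ)⁻¹ * ∑ i ∈ I, Ψ (wT (restrictCompl I S), S i))
      (Measure.pi fun _ : Fin n => μ))
    (hint₂ : Integrable
      (fun p : (Fin (n - k) → Z) × Z => Ψ (wT p.1, p.2))
      ((Measure.pi fun _ : Fin (n - k) => μ).prod μ)) :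
    (∫ S : Fin n → Z,
        ((n.choose k : ℝ))⁻¹ *
          ∑ I ∈ Finset.powersetCard k (Finset.univ : Finset (Fin n)),
            (k : ℝ)⁻¹ * ∑ i ∈ I, Ψ (wT (restrictCompl I S), S i)
        ∂(Measure.pi fun _ : Fin n => μ))
      = ∫ S' : Fin (n - k) → Z,
          (∫ z, Ψ (wT S', z) ∂μ) ∂(Measure.pi fun _ : Fin (n - k) => μ) := by
  classical
  have hg : Measurable fun p : (Fin (n - k) → Z) × Z => Ψ (wT p.1, p.2) :=
    hΨ.comp ((hwT.comp measurable_fst).prodMk measurable_snd)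
  -- per-term identity
  have key : ∀ I ∈ Finset.powersetCard k (Finset.univ : Finset (Fin n)), ∀ i ∈ I,
      (∫ S : Fin n → Z, Ψ (wT (restrictCompl I S), S i) ∂(Measure.pi fun _ : Fin n => μ))
        = (∫ p : (Fin (n - k) → Z) × Z, Ψ (wT p.1, p.2)
            ∂((Measure.pi fun _ : Fin (n - k) => μ).prod μ)) ∧
      Integrable (fun S : Fin n → Z => Ψ (wT (restrictCompl I S), S i))
        (Measure.pi fun _ : Fin n => μ) := by
    intro I hI i hi
    have hIc : I.card = k := (Finset.mem_powersetCard.mp hI).2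
    have h : (Iᶜ : Finset (Fin n)).card = n - k := by
      rw [Finset.card_compl, hIc]; simp
    have MP := measurePreserving_restrictCompl μ I h hi
    constructor
    · have hsm : AEStronglyMeasurable (fun p : (Fin (n - k) → Z) × Z => Ψ (wT p.1, p.2))
          (Measure.map (fun S : Fin n → Z => (restrictCompl I S, S i))
            (Measure.pi fun _ : Fin n => μ)) := by
        rw [MP.map_eq]; exact hg.aestronglyMeasurable
      rw [← MP.map_eq]
      exact (integral_map MP.measurable.aemeasurable hsm).symm
    · exact (MP.integrable_comp hg.aestronglyMeasurable).mpr hint₂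
  have hkne : (k : ℝ) ≠ 0 := by
    have : 0 < k := hk
    positivity
  have hchoose : (n.choose k : ℝ) ≠ 0 := by
    have : 0 < n.choose k := Nat.choose_pos (le_trans hkn (Nat.sub_le n 1))
    positivity
  have hRHS : (∫ S' : Fin (n - k) → Z, (∫ z, Ψ (wT S', z) ∂μ)
      ∂(Measure.pi fun _ : Fin (n - k) => μ))
      = (∫ p : (Fin (n - k) → Z) × Z, Ψ (wT p.1, p.2)
          ∂((Measure.pi fun _ : Fin (n - k) => μ).prod μ)) := (integral_prod _ hint₂).symm
  rw [hRHS]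
  set C : ℝ := ∫ p : (Fin (n - k) → Z) × Z, Ψ (wT p.1, p.2)
      ∂((Measure.pi fun _ : Fin (n - k) => μ).prod μ) with hC
  have hterm : ∀ I ∈ Finset.powersetCard k (Finset.univ : Finset (Fin n)),
      (∫ S : Fin n → Z, (k : ℝ)⁻¹ * ∑ i ∈ I, Ψ (wT (restrictCompl I S), S i)
        ∂(Measure.pi fun _ : Fin n => μ)) = C := by
    intro I hI
    rw [integral_const_mul, integral_finset_sum _ (fun i hi => (key I hI i hi).2),
      Finset.sum_congr rfl (fun i hi => (key I hI i hi).1),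
      Finset.sum_const, (Finset.mem_powersetCard.mp hI).2, nsmul_eq_mul]
    field_simp
  have hIint : ∀ I ∈ Finset.powersetCard k (Finset.univ : Finset (Fin n)),
      Integrable (fun S : Fin n → Z => (k : ℝ)⁻¹ * ∑ i ∈ I, Ψ (wT (restrictCompl I S), S i))
        (Measure.pi fun _ : Fin n => μ) := by
    intro I hI
    exact (integrable_finset_sum _ (fun i hi => (key I hI i hi).2)).const_mul _
  rw [integral_const_mul, integral_finset_sum _ hIint,
    Finset.sum_congr rfl hterm, Finset.sum_const, nsmul_eq_mul,
    Finset.card_powersetCard, Finset.card_univ, Fintype.card_fin]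
  field_simp
end

section
/- Let n ≥ 2, 1 ≤ k ≤ n−1, and fix i ∈ Fin n. For each subset I ⊆ Fin n with |I| = k, define α^{(−I)} ∈ ℝ^n by α^{(−I)}_j = n/(n−k) if j ∉ I and α^{(−I)}_j = 0 if j ∈ I, and let ᾱ ∈ ℝ^n be the all-ones vector. Then (1/(n−1 choose k−1)) ∑_{I : i ∈ I, |I| = k} (ᾱ − α^{(−I)}) equals the vector ν^{(i)} with i-th entry 1 and every other entry −1/(n−1); equivalently it equals (n/(n−1))·(e_i − (1/n)·𝟙), where e_i is the i-th standard basis vector and 𝟙 the all-ones vector. In particular the average is independent of k. -/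
open Finset

lemma countA {γ : Type*} [DecidableEq γ] (s : Finset γ) (a : γ) (ha : a ∈ s) (k : ℕ) :
    ((powersetCard (k+1) s).filter (fun I => a ∈ I)).card
      = (s.card - 1).choose k := by
  rw [← Finset.card_erase_of_mem ha, ← Finset.card_powersetCard]
  apply Finset.card_bij (fun I _ => I.erase a)
  · rintro I hI
    simp only [mem_filter, mem_powersetCard] at hI
    obtain ⟨⟨hsub, hcard⟩, haI⟩ := hI
    rw [mem_powersetCard]
    exact ⟨erase_subset_erase _ hsub, by rw [card_erase_of_mem haI, hcard]; rfl⟩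
  · rintro I hI J hJ h
    simp only [mem_filter] at hI hJ
    rw [← insert_erase hI.2, ← insert_erase hJ.2, h]
  · rintro J hJ
    rw [mem_powersetCard] at hJ
    refine ⟨insert a J, ?_, ?_⟩
    · simp only [mem_filter, mem_powersetCard]
      have haJ : a ∉ J := fun h => (mem_erase.mp (hJ.1 h)).1 rfl
      refine ⟨⟨?_, ?_⟩, mem_insert_self _ _⟩
      · exact insert_subset ha (hJ.1.trans (erase_subset _ _))
      · rw [card_insert_of_notMem haJ, hJ.2]
    · rw [erase_insert (fun h => (mem_erase.mp (hJ.1 h)).1 rfl)]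

lemma countD {γ : Type*} [DecidableEq γ] (s : Finset γ) (a b : γ) (hab : a ≠ b)
    (ha : a ∈ s) (k : ℕ) :
    ((powersetCard (k+1) s).filter (fun I => a ∈ I ∧ b ∉ I)).card
      = (((s.erase b).erase a).card).choose k := by
  rw [← Finset.card_powersetCard]
  apply Finset.card_bij (fun I _ => I.erase a)
  · rintro I hI
    simp only [mem_filter, mem_powersetCard] at hI
    obtain ⟨⟨hsub, hcard⟩, haI, hbI⟩ := hI
    rw [mem_powersetCard]
    refine ⟨fun x hx => ?_, by rw [card_erase_of_mem haI, hcard]; rfl⟩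
    rw [mem_erase] at hx ⊢
    exact ⟨hx.1, mem_erase.mpr ⟨fun h => hbI (h ▸ hx.2), hsub hx.2⟩⟩
  · rintro I hI J hJ h
    simp only [mem_filter] at hI hJ
    rw [← insert_erase hI.2.1, ← insert_erase hJ.2.1, h]
  · rintro J hJ
    rw [mem_powersetCard] at hJ
    have haJ : a ∉ J := fun h => (mem_erase.mp (hJ.1 h)).1 rfl
    have hbJ : b ∉ J := fun h => (mem_erase.mp (mem_erase.mp (hJ.1 h)).2).1 rfl
    refine ⟨insert a J, ?_, erase_insert haJ⟩
    simp only [mem_filter, mem_powersetCard]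
    refine ⟨⟨insert_subset ha (hJ.1.trans ((erase_subset _ _).trans (erase_subset _ _))), ?_⟩,
      mem_insert_self _ _, ?_⟩
    · rw [card_insert_of_notMem haJ, hJ.2]
    · intro h
      rcases mem_insert.mp h with h | h
      · exact hab h.symm
      · exact hbJ h

/-- **Common first variation.** Fix `i ∈ Fin n` and `1 ≤ k ≤ n − 1`. Averaging the
direction `ᾱ − α^{(−I)}` over all size-`k` holdouts `I` containing `i` (where `α^{(−I)}`
places mass `n/(n−k)` on retained points and `0` on held-out points, and `ᾱ` is all-ones)
yields the mass-preserving delete-one direction `ν^{(i)}`, with `i`-th entry `1` and all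
other entries `−1/(n−1)`; equivalently `(n/(n−1)) • (e_i − (1/n) • 𝟙)`. In particular the
average is independent of `k`. -/
theorem common_first_variation {n : ℕ} (hn : 2 ≤ n) (k : ℕ) (hk : 1 ≤ k)
    (hkn : k ≤ n - 1) (i : Fin n)
    (α : Finset (Fin n) → Fin n → ℝ)
    (hα : ∀ I : Finset (Fin n), ∀ j, α I j = if j ∈ I then 0 else (n : ℝ) / ((n : ℝ) - k))
    (ν : Fin n → ℝ)
    (hν : ∀ j, ν j = if j = i then 1 else -(1 / ((n : ℝ) - 1))) :
    (((n - 1).choose (k - 1) : ℝ))⁻¹ •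
        ∑ I ∈ (Finset.powersetCard k (Finset.univ : Finset (Fin n))).filter
            (fun I => i ∈ I),
          ((fun _ => 1) - α I)
      = ν
    ∧ ν = ((n : ℝ) / ((n : ℝ) - 1)) •
        (Pi.single i 1 - ((n : ℝ))⁻¹ • (fun _ : Fin n => (1 : ℝ))) := by
  have hn1 : (1:ℝ) ≤ (n:ℝ) - 1 := by
    have : (2:ℝ) ≤ (n:ℝ) := by exact_mod_cast hn
    linarith
  have hn1ne : (n:ℝ) - 1 ≠ 0 := by linarith
  have hkln : k < n := lt_of_le_of_lt hkn (Nat.sub_lt (by omega) one_pos)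
  have hnk : (1:ℝ) ≤ (n:ℝ) - k := by
    have : (k:ℝ) + 1 ≤ (n:ℝ) := by exact_mod_cast hkln
    linarith
  have hnkne : (n:ℝ) - k ≠ 0 := by linarith
  have hnne : (n:ℝ) ≠ 0 := by positivity
  constructor
  · -- first part
    obtain ⟨k', rfl⟩ : ∃ k', k = k' + 1 := ⟨k - 1, (Nat.succ_pred_eq_of_pos hk).symm⟩
    set S := (Finset.powersetCard (k'+1) (Finset.univ : Finset (Fin n))).filter
        (fun I => i ∈ I) with hS
    have hcardA : S.card = (n - 1).choose k' := by
      rw [hS, countA _ _ (Finset.mem_univ i)]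
      simp
    have hApos : 0 < (n-1).choose k' := Nat.choose_pos (by omega)
    have hAne : ((n-1).choose k' : ℝ) ≠ 0 := by positivity
    funext j
    simp only [Pi.smul_apply, Finset.sum_apply, Pi.sub_apply, smul_eq_mul,
      Nat.add_sub_cancel, hν, hα]
    by_cases hj : j = i
    · subst hj
      rw [if_pos rfl]
      have : ∀ I ∈ S, (1:ℝ) - (if j ∈ I then 0 else (n:ℝ)/((n:ℝ)-(k'+1:ℕ))) = 1 := by
        intro I hI
        rw [if_pos (Finset.mem_filter.mp hI).2]
        ring
      rw [Finset.sum_congr rfl this, Finset.sum_const, hcardA, nsmul_eq_mul, mul_one,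
        inv_mul_cancel₀ hAne]
    · rw [if_neg hj]
      have hsplit : ∀ I : Finset (Fin n),
          (1:ℝ) - (if j ∈ I then 0 else (n:ℝ)/((n:ℝ)-(k'+1:ℕ)))
            = if j ∈ I then 1 else 1 - (n:ℝ)/((n:ℝ)-(k'+1:ℕ)) := by
        intro I; split <;> ring
      rw [Finset.sum_congr rfl (fun I _ => hsplit I), Finset.sum_ite,
        Finset.sum_const, Finset.sum_const, nsmul_eq_mul, nsmul_eq_mul]
      have hDset : S.filter (fun I => ¬ j ∈ I)
          = (Finset.powersetCard (k'+1) (Finset.univ : Finset (Fin n))).filter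
              (fun I => i ∈ I ∧ j ∉ I) := by
        rw [hS, Finset.filter_filter]
      have hcardD : (S.filter (fun I => ¬ j ∈ I)).card = (n - 2).choose k' := by
        rw [hDset, countD _ _ _ (fun h => hj h.symm) (Finset.mem_univ i)]
        congr 1
        rw [Finset.card_erase_of_mem (Finset.mem_erase.mpr ⟨fun h => hj h.symm, Finset.mem_univ i⟩),
          Finset.card_erase_of_mem (Finset.mem_univ j)]
        simp only [Finset.card_univ, Fintype.card_fin]
        omega
      have hBD : (S.filter (fun I => j ∈ I)).card + (S.filter (fun I => ¬ j ∈ I)).card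
          = S.card := Finset.card_filter_add_card_filter_not _
      -- key choose identity
      have hkey : (n-2).choose k' * (n - 1) = (n-1).choose k' * (n - (k'+1)) := by
        have h := Nat.choose_mul_succ_eq (n-2) k'
        have h2 : n - 2 + 1 = n - 1 := by omega
        rw [h2] at h
        have h3 : n - 1 - k' = n - (k'+1) := by omega
        rw [h3] at h
        exact h
      set B := (S.filter (fun I => j ∈ I)).card
      set D := (S.filter (fun I => ¬ j ∈ I)).card
      have hBr : (B:ℝ) = ((n-1).choose k' : ℝ) - D := by
        have : (B:ℝ) + D = ((n-1).choose k' : ℝ) := by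
          exact_mod_cast (hcardA ▸ hBD)
        linarith
      have hkeyr : (D:ℝ) * ((n:ℝ) - 1) = ((n-1).choose k' : ℝ) * ((n:ℝ) - (k'+1:ℕ)) := by
        have hc : (((n-2).choose k' * (n-1) : ℕ) : ℝ)
            = (((n-1).choose k' * (n - (k'+1)) : ℕ) : ℝ) := by
          exact congrArg (fun m : ℕ => (m : ℝ)) hkey
        push_cast [Nat.cast_sub (show 1 ≤ n by omega), Nat.cast_sub (show k'+1 ≤ n by omega)]
          at hc
        rw [hcardD]
        push_cast
        linarith [hc]
      push_cast at hkeyr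
      have hnkne' : (n:ℝ) - ((k':ℝ) + 1) ≠ 0 := by push_cast at hnkne; exact hnkne
      have hDval : (D:ℝ) = ((n-1).choose k' : ℝ) * ((n:ℝ) - ((k':ℝ)+1)) / ((n:ℝ) - 1) := by
        field_simp
        linear_combination hkeyr
      rw [hBr]
      push_cast
      rw [hDval]
      field_simp
      ring
  · -- second part
    funext j
    rw [hν]
    simp only [Pi.smul_apply, Pi.sub_apply, Pi.single_apply, smul_eq_mul]
    by_cases hj : j = i
    · rw [if_pos hj, if_pos hj]
      field_simp
    · rw [if_neg hj, if_neg hj]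
      field_simp
      ring
end

section
/- Let s ≤ t, let A, K : ℝ → Matrix (Fin n) (Fin n) ℝ be continuous on [s,t], and let h, g ∈ ℝ^n. Suppose z_h, z_g : ℝ → ℝ^n solve the forward linear ODE z'(τ) = −A(τ).mulVec z(τ) on [s,t] with z_h(s) = h and z_g(s) = g, and suppose m : ℝ → ℝ^n solves the backward equation m'(τ) = A(τ)ᵀ.mulVec m(τ) − K(τ).mulVec z_h(τ) on [s,t] with terminal condition m(t) = 0. Then ⟨m(s), g⟩ = ∫_{s}^{t} ⟨ K(τ).mulVec z_h(τ), z_g(τ) ⟩ dτ, where ⟨·,·⟩ is the Euclidean inner product on ℝ^n. -/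
/-! The pairing `τ ↦ ⟪m τ, z_g τ⟫` has derivative `-⟪K z_h, z_g⟫`: the two `A`-terms cancel
because `⟪Aᵀ m, z⟫ = ⟪m, A z⟫`. Integrating over `[s, t]` and using `m t = 0` gives the claim. -/

open Matrix

theorem HasDerivAt.dotProduct {𝕜 ι : Type*} [NontriviallyNormedField 𝕜] [Fintype ι]
    {f g : 𝕜 → ι → 𝕜} {f' g' : ι → 𝕜} {x : 𝕜}
    (hf : HasDerivAt f f' x) (hg : HasDerivAt g g' x) :
    HasDerivAt (fun y => f y ⬝ᵥ g y) (f' ⬝ᵥ g x + f x ⬝ᵥ g') x := by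
  have hsum : HasDerivAt (fun y => ∑ i, f y i * g y i)
      (∑ i, (f' i * g x i + f x i * g' i)) x :=
    .fun_sum fun i _ => (hasDerivAt_pi.mp hf i).mul (hasDerivAt_pi.mp hg i)
  simpa only [_root_.dotProduct, Finset.sum_add_distrib] using hsum

theorem HasDerivAt.dotProduct_of_adjoint {𝕜 ι : Type*} [NontriviallyNormedField 𝕜] [Fintype ι]
    {A : Matrix ι ι 𝕜} {m z : 𝕜 → ι → 𝕜} {f : ι → 𝕜} {x : 𝕜}
    (hm : HasDerivAt m (Aᵀ *ᵥ m x - f) x) (hz : HasDerivAt z (-(A *ᵥ z x)) x) :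
    HasDerivAt (fun y => m y ⬝ᵥ z y) (-(f ⬝ᵥ z x)) x := by
  convert hm.dotProduct hz using 1
  rw [sub_dotProduct, dotProduct_neg, dotProduct_mulVec, mulVec_transpose]
  ring

theorem ContinuousOn.matrix_mulVec_dotProduct {X R ι : Type*} [TopologicalSpace X]
    [TopologicalSpace R] [NonUnitalNonAssocSemiring R] [ContinuousAdd R] [ContinuousMul R]
    [Fintype ι] {S : Set X} {K : X → Matrix ι ι R} {u v : X → ι → R}
    (hK : ∀ i j, ContinuousOn (fun x => K x i j) S) (hu : ContinuousOn u S)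
    (hv : ContinuousOn v S) :
    ContinuousOn (fun x => K x *ᵥ u x ⬝ᵥ v x) S := by
  rw [continuousOn_iff_continuous_domRestrict] at hu hv ⊢
  have hK' : Continuous (S.domRestrict K) :=
    continuous_matrix fun i j => continuousOn_iff_continuous_domRestrict.mp (hK i j)
  exact (hK'.matrix_mulVec hu).dotProduct hv

theorem dual_transfer_bilinear_general {n : ℕ} (s t : ℝ) (hst : s ≤ t)
    (A K : ℝ → Matrix (Fin n) (Fin n) ℝ)
    (hK : ∀ i j, ContinuousOn (fun τ => K τ i j) (Set.Icc s t))
    (g : Fin n → ℝ)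
    (zh zg m : ℝ → Fin n → ℝ)
    (hzh : ∀ τ ∈ Set.Icc s t, HasDerivAt zh (-(A τ).mulVec (zh τ)) τ)
    (hzg : ∀ τ ∈ Set.Icc s t, HasDerivAt zg (-(A τ).mulVec (zg τ)) τ)
    (hzg0 : zg s = g)
    (hm : ∀ τ ∈ Set.Icc s t,
      HasDerivAt m ((A τ)ᵀ.mulVec (m τ) - (K τ).mulVec (zh τ)) τ)
    (hmt : m t = 0) :
    m s ⬝ᵥ g = ∫ τ in s..t, (K τ).mulVec (zh τ) ⬝ᵥ zg τ := by
  have hIcc : Set.uIcc s t = Set.Icc s t := Set.uIcc_of_le hst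
  have hderiv : ∀ τ ∈ Set.uIcc s t,
      HasDerivAt (fun x => m x ⬝ᵥ zg x) (-(K τ *ᵥ zh τ ⬝ᵥ zg τ)) τ := by
    rw [hIcc]
    exact fun τ hτ => (hm τ hτ).dotProduct_of_adjoint (hzg τ hτ)
  have hcont : ContinuousOn (fun τ => K τ *ᵥ zh τ ⬝ᵥ zg τ) (Set.uIcc s t) :=
    hIcc ▸ ContinuousOn.matrix_mulVec_dotProduct hK
      (fun τ hτ => (hzh τ hτ).continuousAt.continuousWithinAt)
      (fun τ hτ => (hzg τ hτ).continuousAt.continuousWithinAt)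
  have hFTC := intervalIntegral.integral_eq_sub_of_hasDerivAt hderiv
    hcont.neg.intervalIntegrable
  rw [intervalIntegral.integral_neg, hmt, zero_dotProduct, zero_sub, neg_inj] at hFTC
  rw [← hzg0, hFTC]

/-- **Dual transfer (bilinear form).** If `z_h, z_g` solve the forward linear ODE
`z' = −A(τ) z` with `z_h(s) = h`, `z_g(s) = g`, and `m` solves the backward equation
`m' = A(τ)ᵀ m − K(τ) z_h` with `m(t) = 0`, then
`⟨m(s), g⟩ = ∫_s^t ⟨K(τ) z_h(τ), z_g(τ)⟩ dτ`. -/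
theorem dual_transfer_bilinear {n : ℕ} (s t : ℝ) (hst : s ≤ t)
    (A K : ℝ → Matrix (Fin n) (Fin n) ℝ)
    (hA : ∀ i j, ContinuousOn (fun τ => A τ i j) (Set.Icc s t))
    (hK : ∀ i j, ContinuousOn (fun τ => K τ i j) (Set.Icc s t))
    (h g : Fin n → ℝ)
    (zh zg m : ℝ → Fin n → ℝ)
    (hzh : ∀ τ ∈ Set.Icc s t, HasDerivAt zh (-(A τ).mulVec (zh τ)) τ)
    (hzg : ∀ τ ∈ Set.Icc s t, HasDerivAt zg (-(A τ).mulVec (zg τ)) τ)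
    (hzh0 : zh s = h) (hzg0 : zg s = g)
    (hm : ∀ τ ∈ Set.Icc s t,
      HasDerivAt m ((A τ)ᵀ.mulVec (m τ) - (K τ).mulVec (zh τ)) τ)
    (hmt : m t = 0) :
    m s ⬝ᵥ g = ∫ τ in s..t, (K τ).mulVec (zh τ) ⬝ᵥ zg τ :=
  dual_transfer_bilinear_general s t hst A K hK g zh zg m hzh hzg hzg0 hm hmt
end

section
/- Let d, m ≥ 1, let S ⊆ ℝ^m be a finite set, let z⋆ ∈ ℝ^m with z⋆ ∉ S, let w₀, w_T ∈ ℝ^d with w₀ ≠ w_T, and let F : ℝ^d × ℝ^m → ℝ be infinitely differentiable (ContDiff ℝ ⊤). Then there exists an infinitely differentiable F̃ : ℝ^d × ℝ^m → ℝ such that: (i) for every w ∈ ℝ^d and every z ∈ S, F̃(w, z) = F(w, z) and the Fréchet derivative in the first argument satisfies D_w F̃(w, z) = D_w F(w, z); and (ii) F̃(w_T, z⋆) − F̃(w₀, z⋆) ≠ F(w_T, z⋆) − F(w₀, z⋆). -/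
/-- **Smoothness is necessary.** Given a `C^∞` network `F`, a finite training input set
`S`, a held-out input `z⋆ ∉ S`, and weights `w₀ ≠ w_T`, there is a `C^∞` network `F̃`
agreeing with `F` to first order in the parameters at every training input (same values
and same parameter Fréchet derivatives at every `w`), yet with a different test
displacement at `z⋆`. -/
theorem smoothness_is_necessary {d m : ℕ} (hd : 1 ≤ d) (hm : 1 ≤ m)
    (S : Finset (Fin m → ℝ)) (zstar : Fin m → ℝ) (hzstar : zstar ∉ S)
    (w0 wT : Fin d → ℝ) (hw : w0 ≠ wT)
    (F : (Fin d → ℝ) → (Fin m → ℝ) → ℝ)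
    (hF : ContDiff ℝ (⊤ : ℕ∞) (fun p : (Fin d → ℝ) × (Fin m → ℝ) => F p.1 p.2)) :
    ∃ Ftil : (Fin d → ℝ) → (Fin m → ℝ) → ℝ,
      ContDiff ℝ (⊤ : ℕ∞) (fun p : (Fin d → ℝ) × (Fin m → ℝ) => Ftil p.1 p.2)
      ∧ (∀ w : Fin d → ℝ, ∀ z ∈ S,
          Ftil w z = F w z
          ∧ fderiv ℝ (fun w' => Ftil w' z) w = fderiv ℝ (fun w' => F w' z) w)
      ∧ Ftil wT zstar - Ftil w0 zstar ≠ F wT zstar - F w0 zstar := by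
  obtain ⟨j, hj⟩ := Function.ne_iff.mp hw
  -- analytic "vanishing on S" polynomial
  set g : (Fin m → ℝ) → ℝ := fun z => ∏ s ∈ S, ∑ i, (z i - s i) ^ 2 with hg
  have hgS : ∀ z ∈ S, g z = 0 := by
    intro z hz
    apply Finset.prod_eq_zero hz
    simp
  have hgpos : 0 < g zstar := by
    apply Finset.prod_pos
    intro s hs
    have hne : zstar ≠ s := fun h => hzstar (h ▸ hs)
    obtain ⟨i, hi⟩ := Function.ne_iff.mp hne
    apply Finset.sum_pos' (fun i _ => by positivity)
    exact ⟨i, Finset.mem_univ i, by have : zstar i - s i ≠ 0 := sub_ne_zero.mpr hi; positivity⟩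
  have hgsmooth : ContDiff ℝ (⊤ : ℕ∞) g := by
    apply contDiff_prod
    intro s _
    apply ContDiff.sum
    intro i _
    exact ((contDiff_apply ℝ ℝ i).sub contDiff_const).pow 2
  refine ⟨fun w z => F w z + g z * (w j - w0 j), ?_, ?_, ?_⟩
  · apply hF.add
    apply ContDiff.mul
    · exact hgsmooth.comp (contDiff_snd (E := Fin d → ℝ))
    · exact ((contDiff_apply ℝ ℝ j).comp (contDiff_fst (F := Fin m → ℝ))).sub contDiff_const
  · intro w z hz
    have h0 := hgS z hz
    refine ⟨by simp [h0], ?_⟩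
    congr 1
    funext w'
    simp [h0]
  · have heq : (fun w z => F w z + g z * (w j - w0 j)) wT zstar -
        (fun w z => F w z + g z * (w j - w0 j)) w0 zstar
        = F wT zstar - F w0 zstar + g zstar * (wT j - w0 j) := by ring
    rw [heq]
    intro h
    have h1 : g zstar * (wT j - w0 j) = 0 := by linarith
    rcases mul_eq_zero.mp h1 with h2 | h2
    · exact hgpos.ne' h2
    · exact hj (by linarith)
end

section
/- Let n, d ≥ 1, X ∈ Matrix (Fin n) (Fin d) ℝ, y ∈ ℝ^n, and λ > 0. Suppose w : ℝ → ℝ^d is differentiable and solves the weight-decayed gradient flow w'(t) = −(1/n)·Xᵀ.mulVec (X.mulVec w(t) − y) − λ·w(t) for all t ≥ 0, with w(0) = 0. Then as t → ∞, w(t) converges to Xᵀ.mulVec ((X·Xᵀ + n·λ·1)⁻¹.mulVec y), the kernel ridge regression solution with regularization n·λ (the matrix X·Xᵀ + n·λ·1 is invertible since λ > 0 and X·Xᵀ is positive semidefinite). -/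
/-!
The ridge solution `w★ = Xᵀ (X Xᵀ + n λ)⁻¹ y` is a fixed point of the flow, by the push-through
identity `(Xᵀ X + n λ) Xᵀ = Xᵀ (X Xᵀ + n λ)`. The error `e = w - w★` therefore solves
`e' = -(n⁻¹ Xᵀ X + λ) e`, so `(‖e‖²)' = -2 n⁻¹ ‖X e‖² - 2 λ ‖e‖² ≤ -2 λ ‖e‖²`, and Grönwall's
inequality gives `‖e t‖ ≤ ‖e 0‖ exp (-λ t)`.
-/

open Matrix Filter

open Real in
theorem le_mul_exp_neg_of_hasDerivAt_le {g g' : ℝ → ℝ} {k : ℝ}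
    (hg : ∀ t, 0 ≤ t → HasDerivAt g (g' t) t) (hle : ∀ t, 0 ≤ t → g' t ≤ -k * g t)
    {t : ℝ} (ht : 0 ≤ t) : g t ≤ g 0 * exp (-k * t) := by
  have := le_gronwallBound_of_liminf_deriv_right_le (f' := g') (δ := g 0) (K := -k) (ε := 0)
    (b := t) (fun x hx ↦ (hg x hx.1).continuousAt.continuousWithinAt)
    (fun x hx r hr ↦ by
      simpa only [slope, vsub_eq_sub, smul_eq_mul] using
        (hg x hx.1).hasDerivWithinAt.liminf_right_slope_le hr)
    le_rfl (fun x hx ↦ (add_zero (-k * g x)).symm ▸ hle x hx.1) t ⟨ht, le_rfl⟩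
  rwa [gronwallBound_ε0, sub_zero] at this

section Lyapunov

variable {E : Type*} [NormedAddCommGroup E] [InnerProductSpace ℝ E] {e e' : ℝ → E} {c : ℝ}

open Real in
theorem norm_le_mul_exp_neg_of_inner_hasDerivAt_le (he : ∀ t, 0 ≤ t → HasDerivAt e (e' t) t)
    (hdecay : ∀ t, 0 ≤ t → inner ℝ (e t) (e' t) ≤ -c * ‖e t‖ ^ 2) {t : ℝ} (ht : 0 ≤ t) :
    ‖e t‖ ≤ ‖e 0‖ * exp (-c * t) := by
  have hsq : ‖e t‖ ^ 2 ≤ ‖e 0‖ ^ 2 * exp (-(2 * c) * t) :=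
    le_mul_exp_neg_of_hasDerivAt_le (fun s hs ↦ (he s hs).norm_sq)
      (fun s hs ↦ by linarith [hdecay s hs]) ht
  rw [show exp (-(2 * c) * t) = exp (-c * t) ^ 2 by rw [sq, ← exp_add]; ring_nf, ← mul_pow]
    at hsq
  exact (pow_le_pow_iff_left₀ (norm_nonneg _) (by positivity) two_ne_zero).mp hsq

theorem tendsto_zero_of_inner_hasDerivAt_le (hc : 0 < c)
    (he : ∀ t, 0 ≤ t → HasDerivAt e (e' t) t)
    (hdecay : ∀ t, 0 ≤ t → inner ℝ (e t) (e' t) ≤ -c * ‖e t‖ ^ 2) :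
    Tendsto e atTop (nhds 0) := by
  refine squeeze_zero_norm' ((eventually_ge_atTop 0).mono fun t ht ↦
    norm_le_mul_exp_neg_of_inner_hasDerivAt_le he hdecay ht) ?_
  simpa using (Real.tendsto_exp_neg_atTop_nhds_zero.comp
    (tendsto_id.const_mul_atTop hc)).const_mul ‖e 0‖

end Lyapunov

theorem tendsto_zero_of_hasDerivAt_neg_gram_sub_smul {ι κ : Type*} [Fintype ι] [Fintype κ]
    (X : Matrix κ ι ℝ) {c lam : ℝ} (hc : 0 ≤ c) (hlam : 0 < lam) {e : ℝ → ι → ℝ}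
    (he : ∀ t, 0 ≤ t → HasDerivAt e (-(c • Xᵀ *ᵥ (X *ᵥ e t)) - lam • e t) t) :
    Tendsto e atTop (nhds 0) := by
  -- `ι → ℝ` carries the sup norm; the energy estimate needs the Euclidean one.
  let E := EuclideanSpace.equiv ι ℝ
  have hE : Tendsto (fun t ↦ E.symm (e t)) atTop (nhds 0) := by
    refine tendsto_zero_of_inner_hasDerivAt_le hlam
      (fun t ht ↦ E.symm.hasFDerivAt.comp_hasDerivAt t (he t ht)) fun t _ ↦ ?_
    have hgram : 0 ≤ e t ⬝ᵥ Xᵀ *ᵥ (X *ᵥ e t) := by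
      rw [dotProduct_mulVec, vecMul_transpose]
      exact dotProduct_self_star_nonneg _
    rw [← real_inner_self_eq_norm_sq]
    simp only [EuclideanSpace.inner_eq_star_dotProduct]
    change (-(c • Xᵀ *ᵥ (X *ᵥ e t)) - lam • e t) ⬝ᵥ star (e t) ≤ -lam * (e t ⬝ᵥ star (e t))
    rw [star_trivial, sub_dotProduct, neg_dotProduct, smul_dotProduct, smul_dotProduct,
      dotProduct_comm _ (e t), smul_eq_mul, smul_eq_mul]
    nlinarith [mul_nonneg hc hgram]
  simpa only [Function.comp_def, E.apply_symm_apply, map_zero] using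
    (E.continuous.tendsto 0).comp hE

theorem transpose_mul_add_smul_one_mulVec_ridge {m n R : Type*} [Fintype m] [Fintype n]
    [DecidableEq m] [DecidableEq n] [CommRing R] (X : Matrix m n R) (c : R) (y : m → R)
    (hB : IsUnit (X * Xᵀ + c • 1).det) :
    (Xᵀ * X + c • 1) *ᵥ (Xᵀ *ᵥ ((X * Xᵀ + c • 1)⁻¹ *ᵥ y)) = Xᵀ *ᵥ y := by
  have hpush : (Xᵀ * X + c • 1) * Xᵀ = Xᵀ * (X * Xᵀ + c • 1) := by
    simp only [Matrix.add_mul, Matrix.mul_add, Matrix.smul_mul, Matrix.mul_smul, Matrix.one_mul,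
      Matrix.mul_one, Matrix.mul_assoc]
  rw [mulVec_mulVec, mulVec_mulVec, hpush, Matrix.mul_assoc, mul_nonsing_inv _ hB,
    Matrix.mul_one]

theorem isUnit_det_mul_transpose_add_smul_one {m n : Type*} [Fintype m] [Fintype n]
    [DecidableEq m] (X : Matrix m n ℝ) {c : ℝ} (hc : 0 < c) :
    IsUnit (X * Xᵀ + c • 1).det := by
  have hgram : (X * Xᵀ).PosSemidef := by
    simpa only [conjTranspose_eq_transpose_of_trivial] using posSemidef_self_mul_conjTranspose X
  exact (PosDef.posSemidef_add hgram (PosDef.one.smul hc)).det_pos.ne'.isUnit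

theorem weight_decayed_flow_to_ridge_general {n d : ℕ} (hn : 1 ≤ n)
    (X : Matrix (Fin n) (Fin d) ℝ) (y : Fin n → ℝ) (lam : ℝ) (hlam : 0 < lam)
    (w : ℝ → Fin d → ℝ)
    (hw : ∀ t : ℝ, 0 ≤ t →
      HasDerivAt w
        (-((n : ℝ)⁻¹ • Xᵀ.mulVec (X.mulVec (w t) - y)) - lam • w t) t) :
    Tendsto w atTop
      (nhds (Xᵀ.mulVec
        ((X * Xᵀ + ((n : ℝ) * lam) • (1 : Matrix (Fin n) (Fin n) ℝ))⁻¹.mulVec y))) := by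
  have hn0 : (n : ℝ) ≠ 0 := Nat.cast_ne_zero.mpr (by omega)
  set wR := Xᵀ *ᵥ ((X * Xᵀ + ((n : ℝ) * lam) • 1)⁻¹ *ᵥ y)
  have hnormal : (Xᵀ * X + ((n : ℝ) * lam) • 1) *ᵥ wR = Xᵀ *ᵥ y :=
    transpose_mul_add_smul_one_mulVec_ridge X _ y
      (isUnit_det_mul_transpose_add_smul_one X (by positivity))
  have hfix : (n : ℝ)⁻¹ • Xᵀ *ᵥ (X *ᵥ wR - y) + lam • wR = 0 := by
    rw [mulVec_sub, ← hnormal, add_mulVec, ← mulVec_mulVec, smul_mulVec, one_mulVec,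
      sub_add_cancel_left, smul_neg, smul_smul, inv_mul_cancel_left₀ hn0, neg_add_cancel]
  have herr : Tendsto (fun t ↦ w t - wR) atTop (nhds 0) :=
    tendsto_zero_of_hasDerivAt_neg_gram_sub_smul X (inv_nonneg.mpr n.cast_nonneg) hlam
      fun t ht ↦ ((hw t ht).sub_const wR).congr_deriv (by
        simp only [mulVec_sub] at hfix ⊢
        linear_combination (norm := module) -hfix)
  simpa using herr.add_const wR

/-- **Weight-decayed gradient flow converges to ridge regression.** If `w` solves
`w'(t) = −(1/n) Xᵀ (X w(t) − y) − λ w(t)` for `t ≥ 0` with `w(0) = 0` and `λ > 0`, then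
`w(t) → Xᵀ (X Xᵀ + n λ I)⁻¹ y` as `t → ∞`, the kernel ridge regression solution with
regularization `n λ`. -/
theorem weight_decayed_flow_to_ridge {n d : ℕ} (hn : 1 ≤ n) (hd : 1 ≤ d)
    (X : Matrix (Fin n) (Fin d) ℝ) (y : Fin n → ℝ) (lam : ℝ) (hlam : 0 < lam)
    (w : ℝ → Fin d → ℝ)
    (hw : ∀ t : ℝ, 0 ≤ t →
      HasDerivAt w
        (-((n : ℝ)⁻¹ • Xᵀ.mulVec (X.mulVec (w t) - y)) - lam • w t) t)
    (hw0 : w 0 = 0) :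
    Tendsto w atTop
      (nhds (Xᵀ.mulVec
        ((X * Xᵀ + ((n : ℝ) * lam) • (1 : Matrix (Fin n) (Fin n) ℝ))⁻¹.mulVec y))) :=
  weight_decayed_flow_to_ridge_general hn X y lam hlam w hw
end
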